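/- (Laplacian of the coordinate functions of the second family S₂, system (3.6.a)) Under the ruled hypothesis Q = −uP, u_y + u·u_x = 0, the Laplace–Beltrami operator Δ of the graph of f applied to the coordinate functions (x,y) ↦ x, (x,y) ↦ y and to f satisfies on D: Δx = −(P/W²)(u − 2HW), Δy = −(P/W²)(1 + 2uHW), and Δf = −(1/W²)(½P(x − uy) + HW(2 + Py + Pux)), where H = (f_xx + f_yy)/(2W³) and W² = 1 + P²(1 + u²). -/

import Mathlib

noncomputable section

/-- Partial derivative with respect to the first (x) variable. -/
def pdx (f : ℝ × ℝ → ℝ) : ℝ × ℝ → ℝ := fun p => fderiv ℝ f p (1, 0)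

/-- Partial derivative with respect to the second (y) variable. -/
def pdy (f : ℝ × ℝ → ℝ) : ℝ × ℝ → ℝ := fun p => fderiv ℝ f p (0, 1)

/-- `P = f_x + y/2`. -/
def Pf (f : ℝ × ℝ → ℝ) : ℝ × ℝ → ℝ := fun p => pdx f p + p.2 / 2

/-- `Q = f_y - x/2`. -/
def Qf (f : ℝ × ℝ → ℝ) : ℝ × ℝ → ℝ := fun p => pdy f p - p.1 / 2

/-- First fundamental form coefficient `E = 1 + P²`. -/
def Ef (f : ℝ × ℝ → ℝ) : ℝ × ℝ → ℝ := fun p => 1 + Pf f p ^ 2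

/-- First fundamental form coefficient `F = P·Q`. -/
def Ff (f : ℝ × ℝ → ℝ) : ℝ × ℝ → ℝ := fun p => Pf f p * Qf f p

/-- First fundamental form coefficient `G = 1 + Q²`. -/
def Gf (f : ℝ × ℝ → ℝ) : ℝ × ℝ → ℝ := fun p => 1 + Qf f p ^ 2

/-- `W = √(EG − F²) = √(1 + P² + Q²)`. -/
def Wf (f : ℝ × ℝ → ℝ) : ℝ × ℝ → ℝ := fun p => Real.sqrt (1 + Pf f p ^ 2 + Qf f p ^ 2)

/-- Second fundamental form coefficient `L = (f_xx + PQ)/W`. -/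
def Lf (f : ℝ × ℝ → ℝ) : ℝ × ℝ → ℝ := fun p => (pdx (pdx f) p + Pf f p * Qf f p) / Wf f p

/-- Second fundamental form coefficient `M = (f_xy + (Q² − P²)/2)/W`. -/
def Mf (f : ℝ × ℝ → ℝ) : ℝ × ℝ → ℝ :=
  fun p => (pdx (pdy f) p + (Qf f p ^ 2 - Pf f p ^ 2) / 2) / Wf f p

/-- Second fundamental form coefficient `N = (f_yy − PQ)/W`. -/
def Nf (f : ℝ × ℝ → ℝ) : ℝ × ℝ → ℝ := fun p => (pdy (pdy f) p - Pf f p * Qf f p) / Wf f p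

/-- Mean curvature `H = (EN − 2FM + GL)/(2W²)`. -/
def Hf (f : ℝ × ℝ → ℝ) : ℝ × ℝ → ℝ :=
  fun p => (Ef f p * Nf f p - 2 * Ff f p * Mf f p + Gf f p * Lf f p) / (2 * Wf f p ^ 2)

/-- The Laplace–Beltrami operator of the graph of `f`, with the sign convention
`Δφ = −(1/W)[∂_x((G φ_x − F φ_y)/W) + ∂_y((−F φ_x + E φ_y)/W)]`. -/
def lapS (f φ : ℝ × ℝ → ℝ) : ℝ × ℝ → ℝ := fun p =>
  -(1 / Wf f p) *
    (pdx (fun q => (Gf f q * pdx φ q - Ff f q * pdy φ q) / Wf f q) p +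
     pdy (fun q => (-(Ff f q) * pdx φ q + Ef f q * pdy φ q) / Wf f q) p)

/-- Mean curvature in the form `H = (f_xx + f_yy)/(2W³)`. -/
def Hm (f : ℝ × ℝ → ℝ) : ℝ × ℝ → ℝ :=
  fun p => (pdx (pdx f) p + pdy (pdy f) p) / (2 * Wf f p ^ 3)

/-- `H₁ = (f_xx + f_yy)/W`. -/
def H1f (f : ℝ × ℝ → ℝ) : ℝ × ℝ → ℝ :=
  fun p => (pdx (pdx f) p + pdy (pdy f) p) / Wf f p
/-!
Expanding the divergence form of `Δ` expresses `Δφ` through `P`, `Q`, their first partials and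
the partials of `φ` up to order two. With `a = f_xx`, `b = f_xy`, `c = f_yy` one has `P_x = a`,
`P_y = b + 1/2`, `Q_x = b - 1/2`, `Q_y = c`; differentiating `Q = -uP` and using the Burgers
equation `u_y + u u_x = 0` eliminates `u_x`, `u_y` and leaves `c = -u²a - 2ub`. After substituting
`Q = -uP`, `W² = 1 + P²(1 + u²)` and `HW = (a + c)/(2W²)`, each formula becomes a rational identity
in `P`, `u`, `a`, `b`, `x`, `y`.
-/

open Filter Topology

section Partials

variable {g h : ℝ × ℝ → ℝ} {p : ℝ × ℝ}

lemma pdx_const (c : ℝ) : pdx (fun _ => c) = fun _ => 0 := by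
  funext q; simp [pdx]

lemma pdy_const (c : ℝ) : pdy (fun _ => c) = fun _ => 0 := by
  funext q; simp [pdy]

lemma pdx_fst : pdx (fun q : ℝ × ℝ => q.1) = fun _ => 1 := by
  funext q; simp [pdx, fderiv_fst]

lemma pdy_fst : pdy (fun q : ℝ × ℝ => q.1) = fun _ => 0 := by
  funext q; simp [pdy, fderiv_fst]

lemma pdx_snd : pdx (fun q : ℝ × ℝ => q.2) = fun _ => 0 := by
  funext q; simp [pdx, fderiv_snd]

lemma pdy_snd : pdy (fun q : ℝ × ℝ => q.2) = fun _ => 1 := by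
  funext q; simp [pdy, fderiv_snd]

lemma pdx_neg : pdx (fun q => -g q) p = -pdx g p := by
  simp [pdx, fderiv_fun_neg]

lemma pdy_neg : pdy (fun q => -g q) p = -pdy g p := by
  simp [pdy, fderiv_fun_neg]

lemma pdx_mul (hg : DifferentiableAt ℝ g p) (hh : DifferentiableAt ℝ h p) :
    pdx (fun q => g q * h q) p = pdx g p * h p + g p * pdx h p := by
  simp only [pdx, fderiv_fun_mul hg hh, add_apply, smul_apply, smul_eq_mul]
  ring

lemma pdy_mul (hg : DifferentiableAt ℝ g p) (hh : DifferentiableAt ℝ h p) :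
    pdy (fun q => g q * h q) p = pdy g p * h p + g p * pdy h p := by
  simp only [pdy, fderiv_fun_mul hg hh, add_apply, smul_apply, smul_eq_mul]
  ring

lemma HasFDerivAt.pdx_eq {g' : ℝ × ℝ →L[ℝ] ℝ} (h : HasFDerivAt g g' p) :
    pdx g p = g' (1, 0) := by
  rw [pdx, h.fderiv]

lemma HasFDerivAt.pdy_eq {g' : ℝ × ℝ →L[ℝ] ℝ} (h : HasFDerivAt g g' p) :
    pdy g p = g' (0, 1) := by
  rw [pdy, h.fderiv]

end Partials

section SecondOrder

variable {f : ℝ × ℝ → ℝ} {p : ℝ × ℝ}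

lemma hasFDerivAt_Pf (hf : DifferentiableAt ℝ (pdx f) p) :
    HasFDerivAt (Pf f) (fderiv ℝ (pdx f) p + (2 : ℝ)⁻¹ • ContinuousLinearMap.snd ℝ ℝ ℝ)
      p := by
  unfold Pf
  simp_rw [div_eq_mul_inv]
  exact hf.hasFDerivAt.fun_add (hasFDerivAt_snd.mul_const _)

lemma hasFDerivAt_Qf (hf : DifferentiableAt ℝ (pdy f) p) :
    HasFDerivAt (Qf f) (fderiv ℝ (pdy f) p - (2 : ℝ)⁻¹ • ContinuousLinearMap.fst ℝ ℝ ℝ)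
      p := by
  unfold Qf
  simp_rw [div_eq_mul_inv]
  exact hf.hasFDerivAt.fun_sub (hasFDerivAt_fst.mul_const _)

lemma pdx_Pf (hf : DifferentiableAt ℝ (pdx f) p) : pdx (Pf f) p = pdx (pdx f) p := by
  simp [pdx, (hasFDerivAt_Pf hf).fderiv]

lemma pdy_Pf (hf : DifferentiableAt ℝ (pdx f) p) : pdy (Pf f) p = pdy (pdx f) p + 1 / 2 := by
  simp [pdy, (hasFDerivAt_Pf hf).fderiv]

lemma pdx_Qf (hf : DifferentiableAt ℝ (pdy f) p) : pdx (Qf f) p = pdx (pdy f) p - 1 / 2 := by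
  simp [pdx, (hasFDerivAt_Qf hf).fderiv]

lemma pdy_Qf (hf : DifferentiableAt ℝ (pdy f) p) : pdy (Qf f) p = pdy (pdy f) p := by
  simp [pdy, (hasFDerivAt_Qf hf).fderiv]

lemma ContDiffAt.differentiableAt_fderiv (hf : ContDiffAt ℝ 2 f p) :
    DifferentiableAt ℝ (fderiv ℝ f) p :=
  (hf.fderiv_right (m := 1) (by norm_num)).differentiableAt (by norm_num)

lemma ContDiffAt.differentiableAt_pdx (hf : ContDiffAt ℝ 2 f p) : DifferentiableAt ℝ (pdx f) p :=
  hf.differentiableAt_fderiv.clm_apply (differentiableAt_const _)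

lemma ContDiffAt.differentiableAt_pdy (hf : ContDiffAt ℝ 2 f p) : DifferentiableAt ℝ (pdy f) p :=
  hf.differentiableAt_fderiv.clm_apply (differentiableAt_const _)

lemma ContDiffAt.differentiableAt_Pf (hf : ContDiffAt ℝ 2 f p) : DifferentiableAt ℝ (Pf f) p :=
  (hasFDerivAt_Pf hf.differentiableAt_pdx).differentiableAt

lemma ContDiffAt.differentiableAt_Qf (hf : ContDiffAt ℝ 2 f p) : DifferentiableAt ℝ (Qf f) p :=
  (hasFDerivAt_Qf hf.differentiableAt_pdy).differentiableAt

lemma ContDiffAt.pdy_pdx_eq_pdx_pdy (hf : ContDiffAt ℝ 2 f p) :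
    pdy (pdx f) p = pdx (pdy f) p := by
  change fderiv ℝ (fun q => fderiv ℝ f q (1, 0)) p (0, 1)
    = fderiv ℝ (fun q => fderiv ℝ f q (0, 1)) p (1, 0)
  simpa [fderiv_clm_apply hf.differentiableAt_fderiv (differentiableAt_const _)]
    using hf.isSymmSndFDerivAt (by simp) (0, 1) (1, 0)

theorem ContDiffAt.pdy_pdy_eq_of_ruled {u : ℝ × ℝ → ℝ} (hf : ContDiffAt ℝ 2 f p)
    (hu : DifferentiableAt ℝ u p) (hruled : Qf f =ᶠ[𝓝 p] fun q => -u q * Pf f q)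
    (hburgers : pdy u p + u p * pdx u p = 0) :
    pdy (pdy f) p = -u p ^ 2 * pdx (pdx f) p - 2 * u p * pdx (pdy f) p := by
  have hx : pdx (Qf f) p = pdx (fun q => -u q * Pf f q) p := by
    rw [pdx, hruled.fderiv_eq]; rfl
  have hy : pdy (Qf f) p = pdy (fun q => -u q * Pf f q) p := by
    rw [pdy, hruled.fderiv_eq]; rfl
  rw [pdx_mul hu.fun_neg hf.differentiableAt_Pf, pdx_neg, pdx_Qf hf.differentiableAt_pdy,
    pdx_Pf hf.differentiableAt_pdx] at hx
  rw [pdy_mul hu.fun_neg hf.differentiableAt_Pf, pdy_neg, pdy_Qf hf.differentiableAt_pdy,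
    pdy_Pf hf.differentiableAt_pdx, hf.pdy_pdx_eq_pdx_pdy] at hy
  linear_combination hy + u p * hx - Pf f p * hburgers

end SecondOrder

section LaplaceBeltrami

variable {f φ : ℝ × ℝ → ℝ} {p : ℝ × ℝ}

lemma Wf_pos : 0 < Wf f p := Real.sqrt_pos.2 (by positivity)

lemma Wf_sq : Wf f p ^ 2 = 1 + Pf f p ^ 2 + Qf f p ^ 2 := Real.sq_sqrt (by positivity)

lemma hasFDerivAt_Wf {P' Q' : ℝ × ℝ →L[ℝ] ℝ} (hP : HasFDerivAt (Pf f) P' p)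
    (hQ : HasFDerivAt (Qf f) Q' p) :
    HasFDerivAt (Wf f) ((Wf f p)⁻¹ • (Pf f p • P' + Qf f p • Q')) p := by
  have h : HasFDerivAt (Wf f) _ p := (((hP.pow 2).const_add 1).fun_add (hQ.pow 2)).sqrt
    (by positivity : (0 : ℝ) < 1 + Pf f p ^ 2 + Qf f p ^ 2).ne'
  refine h.congr_fderiv ?_
  change (1 / (2 * Wf f p)) • _ = _
  simp only [nsmul_eq_mul, Nat.cast_ofNat]
  module

theorem lapS_eq (hP : DifferentiableAt ℝ (Pf f) p) (hQ : DifferentiableAt ℝ (Qf f) p)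
    (hφx : DifferentiableAt ℝ (pdx φ) p) (hφy : DifferentiableAt ℝ (pdy φ) p) :
    lapS f φ p =
      -(1 / Wf f p ^ 2) *
          (2 * Qf f p * pdx (Qf f) p * pdx φ p + Gf f p * pdx (pdx φ) p
            - (pdx (Pf f) p * Qf f p + Pf f p * pdx (Qf f) p) * pdy φ p - Ff f p * pdx (pdy φ) p
            - (pdy (Pf f) p * Qf f p + Pf f p * pdy (Qf f) p) * pdx φ p - Ff f p * pdy (pdx φ) p
            + 2 * Pf f p * pdy (Pf f) p * pdy φ p + Ef f p * pdy (pdy φ) p) +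
        (1 / (Wf f p ^ 2) ^ 2) *
          ((Gf f p * pdx φ p - Ff f p * pdy φ p) * (Pf f p * pdx (Pf f) p + Qf f p * pdx (Qf f) p)
            + (-Ff f p * pdx φ p + Ef f p * pdy φ p)
              * (Pf f p * pdy (Pf f) p + Qf f p * pdy (Qf f) p)) := by
  have hW := hasFDerivAt_Wf hP.hasFDerivAt hQ.hasFDerivAt
  have hE : HasFDerivAt (Ef f) _ p := (hP.hasFDerivAt.pow 2).const_add 1
  have hF : HasFDerivAt (Ff f) _ p := hP.hasFDerivAt.mul hQ.hasFDerivAt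
  have hG : HasFDerivAt (Gf f) _ p := (hQ.hasFDerivAt.pow 2).const_add 1
  have hWinv : HasFDerivAt (fun q => (Wf f q)⁻¹) _ p :=
    (hasDerivAt_inv Wf_pos.ne').comp_hasFDerivAt p hW
  have hX := ((hG.fun_mul hφx.hasFDerivAt).fun_sub (hF.fun_mul hφy.hasFDerivAt)).fun_mul hWinv
  have hY :=
    ((hF.fun_neg.fun_mul hφx.hasFDerivAt).fun_add (hE.fun_mul hφy.hasFDerivAt)).fun_mul hWinv
  simp only [lapS, div_eq_mul_inv]
  rw [hX.pdx_eq, hY.pdy_eq]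
  simp only [pdx, pdy, one_mul, smul_add, neg_smul, smul_neg, Nat.add_one_sub_one, pow_one, nsmul_eq_mul,
    Nat.cast_ofNat, add_apply, neg_apply, smul_apply, smul_eq_mul, sub_apply, neg_mul, neg_add_rev]
  field_simp
  ring

lemma Hm_mul_Wf : Hm f p * Wf f p = (pdx (pdx f) p + pdy (pdy f) p) / (2 * Wf f p ^ 2) := by
  have hW : Wf f p ≠ 0 := Wf_pos.ne'
  simp only [Hm]
  field_simp

end LaplaceBeltrami

section Ruled

variable {f : ℝ × ℝ → ℝ} {p : ℝ × ℝ} {v : ℝ}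

lemma Wf_sq_of_ruled (hQ : Qf f p = -v * Pf f p) :
    Wf f p ^ 2 = 1 + Pf f p ^ 2 * (1 + v ^ 2) := by
  rw [Wf_sq, hQ]; ring

variable (hf : ContDiffAt ℝ 2 f p) (hQ : Qf f p = -v * Pf f p)
  (hc : pdy (pdy f) p = -v ^ 2 * pdx (pdx f) p - 2 * v * pdx (pdy f) p)
include hf hQ hc

theorem lapS_fst_of_ruled :
    lapS f (fun q => q.1) p = -(Pf f p / Wf f p ^ 2) * (v - 2 * Hm f p * Wf f p) := by
  have hW := Wf_sq_of_ruled hQ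
  rw [lapS_eq hf.differentiableAt_Pf hf.differentiableAt_Qf (by simp [pdx_fst])
    (by simp [pdy_fst]), mul_assoc 2 (Hm f p), Hm_mul_Wf, pdx_Pf hf.differentiableAt_pdx,
    pdy_Pf hf.differentiableAt_pdx, pdx_Qf hf.differentiableAt_pdy,
    pdy_Qf hf.differentiableAt_pdy, hf.pdy_pdx_eq_pdx_pdy, hc, hW]
  simp only [pdx_fst, pdy_fst, pdx_const, pdy_const, Ef, Ff, Gf, hQ]
  field_simp
  ring

theorem lapS_snd_of_ruled :
    lapS f (fun q => q.2) p = -(Pf f p / Wf f p ^ 2) * (1 + 2 * v * Hm f p * Wf f p) := by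
  have hW := Wf_sq_of_ruled hQ
  rw [lapS_eq hf.differentiableAt_Pf hf.differentiableAt_Qf (by simp [pdx_snd])
    (by simp [pdy_snd]), mul_assoc (2 * v) (Hm f p), Hm_mul_Wf,
    pdx_Pf hf.differentiableAt_pdx, pdy_Pf hf.differentiableAt_pdx, pdx_Qf hf.differentiableAt_pdy,
    pdy_Qf hf.differentiableAt_pdy, hf.pdy_pdx_eq_pdx_pdy, hc, hW]
  simp only [pdx_snd, pdy_snd, pdx_const, pdy_const, Ef, Ff, Gf, hQ]
  field_simp
  ring

theorem lapS_self_of_ruled :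
    lapS f f p = -(1 / Wf f p ^ 2) * ((1 / 2) * Pf f p * (p.1 - v * p.2) +
      Hm f p * Wf f p * (2 + Pf f p * p.2 + Pf f p * v * p.1)) := by
  have hW := Wf_sq_of_ruled hQ
  have hfx : pdx f p = Pf f p - p.2 / 2 := by simp [Pf]
  have hfy : pdy f p = Qf f p + p.1 / 2 := by simp [Qf]
  rw [lapS_eq hf.differentiableAt_Pf hf.differentiableAt_Qf hf.differentiableAt_pdx
    hf.differentiableAt_pdy, Hm_mul_Wf, pdx_Pf hf.differentiableAt_pdx,
    pdy_Pf hf.differentiableAt_pdx, pdx_Qf hf.differentiableAt_pdy,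
    pdy_Qf hf.differentiableAt_pdy, hf.pdy_pdx_eq_pdx_pdy, hc, hfx, hfy, hW]
  simp only [Ef, Ff, Gf, hQ]
  field_simp
  ring

end Ruled

theorem laplacian_coordinates_S2_general
    (D : Set (ℝ × ℝ)) (hD : IsOpen D)
    (f : ℝ × ℝ → ℝ) (hf : ContDiffOn ℝ (⊤ : ℕ∞) f D)
    (u : ℝ × ℝ → ℝ) (hu : ContDiffOn ℝ (⊤ : ℕ∞) u D)
    (hruled : ∀ p ∈ D, Qf f p = -(u p) * Pf f p)
    (hburgers : ∀ p ∈ D, pdy u p + u p * pdx u p = 0) :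
    ∀ p ∈ D,
      (Wf f p ^ 2 = 1 + Pf f p ^ 2 * (1 + u p ^ 2)) ∧
      (lapS f (fun q => q.1) p =
        -(Pf f p / Wf f p ^ 2) * (u p - 2 * Hm f p * Wf f p)) ∧
      (lapS f (fun q => q.2) p =
        -(Pf f p / Wf f p ^ 2) * (1 + 2 * u p * Hm f p * Wf f p)) ∧
      (lapS f f p =
        -(1 / Wf f p ^ 2) *
          ((1 / 2) * Pf f p * (p.1 - u p * p.2) +
            Hm f p * Wf f p * (2 + Pf f p * p.2 + Pf f p * u p * p.1))) := by
  intro p hp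
  have hDp : D ∈ 𝓝 p := hD.mem_nhds hp
  have hf2 : ContDiffAt ℝ 2 f p := (hf.contDiffAt hDp).of_le (WithTop.coe_le_coe.mpr le_top)
  have hc := hf2.pdy_pdy_eq_of_ruled ((hu.contDiffAt hDp).differentiableAt (by simp))
    (eventually_of_mem hDp hruled) (hburgers p hp)
  exact ⟨Wf_sq_of_ruled (hruled p hp), lapS_fst_of_ruled hf2 (hruled p hp) hc,
    lapS_snd_of_ruled hf2 (hruled p hp) hc, lapS_self_of_ruled hf2 (hruled p hp) hc⟩

/-- **Laplacian of the coordinate functions of the second family `S₂`** (system (3.6.a)):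
under the ruled hypothesis `Q = −uP`, `u_y + u·u_x = 0`, on `D` one has
`W² = 1 + P²(1 + u²)`, `Δx = −(P/W²)(u − 2HW)`, `Δy = −(P/W²)(1 + 2uHW)` and
`Δf = −(1/W²)(½P(x − uy) + HW(2 + Py + Pux))`, where `H = (f_xx + f_yy)/(2W³)`. -/
theorem laplacian_coordinates_S2
    (D : Set (ℝ × ℝ)) (hD : IsOpen D) (hDne : D.Nonempty)
    (f : ℝ × ℝ → ℝ) (hf : ContDiffOn ℝ (⊤ : ℕ∞) f D)
    (u : ℝ × ℝ → ℝ) (hu : ContDiffOn ℝ (⊤ : ℕ∞) u D)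
    (hruled : ∀ p ∈ D, Qf f p = -(u p) * Pf f p)
    (hburgers : ∀ p ∈ D, pdy u p + u p * pdx u p = 0) :
    ∀ p ∈ D,
      (Wf f p ^ 2 = 1 + Pf f p ^ 2 * (1 + u p ^ 2)) ∧
      (lapS f (fun q => q.1) p =
        -(Pf f p / Wf f p ^ 2) * (u p - 2 * Hm f p * Wf f p)) ∧
      (lapS f (fun q => q.2) p =
        -(Pf f p / Wf f p ^ 2) * (1 + 2 * u p * Hm f p * Wf f p)) ∧
      (lapS f f p =
        -(1 / Wf f p ^ 2) *
          ((1 / 2) * Pf f p * (p.1 - u p * p.2) +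
            Hm f p * Wf f p * (2 + Pf f p * p.2 + Pf f p * u p * p.1))) :=
  laplacian_coordinates_S2_general D hD f hf u hu hruled hburgers
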